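/- Let φ : ℝ³ → ℝ be a smooth function of (t,x,y) satisfying the 2D incompressible Euler vorticity equation Δφ_t + φ_x·Δφ_y − φ_y·Δφ_x = 0, where Δ = ∂_x² + ∂_y². Then q(t,x,y) = φ(t,x,y) satisfies the adjoint-symmetry determining equation along φ: ∂_t Δq + ∂_y Δ(φ_x·q) + ∂_x(Δφ_y·q) − ∂_x Δ(φ_y·q) − ∂_y(Δφ_x·q) = 0 holds identically. -/

import Mathlib

/-- partial derivative in t (first variable) -/
noncomputable def pt (f : ℝ × ℝ × ℝ → ℝ) : ℝ × ℝ × ℝ → ℝ :=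
  fun p => deriv (fun s => f (s, p.2.1, p.2.2)) p.1

/-- partial derivative in x (second variable) -/
noncomputable def px (f : ℝ × ℝ × ℝ → ℝ) : ℝ × ℝ × ℝ → ℝ :=
  fun p => deriv (fun s => f (p.1, s, p.2.2)) p.2.1

/-- partial derivative in y (third variable) -/
noncomputable def py (f : ℝ × ℝ × ℝ → ℝ) : ℝ × ℝ × ℝ → ℝ :=
  fun p => deriv (fun s => f (p.1, p.2.1, s)) p.2.2

/-- spatial Laplacian Δ = ∂_x² + ∂_y² -/
noncomputable def lap (f : ℝ × ℝ × ℝ → ℝ) : ℝ × ℝ × ℝ → ℝ :=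
  fun p => px (px f) p + py (py f) p

/-- the 2D vorticity equation Δφ_t + φ_x·Δφ_y − φ_y·Δφ_x = 0 -/
def VorticityEq (φ : ℝ × ℝ × ℝ → ℝ) : Prop :=
  ∀ p : ℝ × ℝ × ℝ,
    pt (lap φ) p + px φ p * py (lap φ) p - py φ p * px (lap φ) p = 0

/-- the adjoint-symmetry determining equation along φ:
∂_t Δq + ∂_y Δ(φ_x·q) + ∂_x(Δφ_y·q) − ∂_x Δ(φ_y·q) − ∂_y(Δφ_x·q) = 0 -/
def AdjointSymmetryEq (φ q : ℝ × ℝ × ℝ → ℝ) : Prop :=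
  ∀ p : ℝ × ℝ × ℝ,
    pt (lap q) p
      + py (lap (fun r => px φ r * q r)) p
      + px (fun r => py (lap φ) r * q r) p
      - px (lap (fun r => py φ r * q r)) p
      - py (fun r => px (lap φ) r * q r) p = 0

namespace VortAux

/-- directional derivative -/
noncomputable def D (v : ℝ × ℝ × ℝ) (f : ℝ × ℝ × ℝ → ℝ) : ℝ × ℝ × ℝ → ℝ :=
  fun p => fderiv ℝ f p v

lemma D_smooth (v : ℝ × ℝ × ℝ) {f : ℝ × ℝ × ℝ → ℝ} (hf : ContDiff ℝ (⊤ : ℕ∞) f) :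
    ContDiff ℝ (⊤ : ℕ∞) (D v f) :=
  (hf.fderiv_right (by simp)).clm_apply contDiff_const

lemma D_comm (v w : ℝ × ℝ × ℝ) {f : ℝ × ℝ × ℝ → ℝ} (hf : ContDiff ℝ (⊤ : ℕ∞) f) :
    D v (D w f) = D w (D v f) := by
  funext p
  have hdiff : ∀ y, HasFDerivAt f (fderiv ℝ f y) y :=
    fun y => (hf.differentiable (by simp) y).hasFDerivAt
  have hf' : ContDiff ℝ (⊤ : ℕ∞) (fderiv ℝ f) := hf.fderiv_right (by simp)
  have hx : HasFDerivAt (fderiv ℝ f) (fderiv ℝ (fderiv ℝ f) p) p :=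
    (hf'.differentiable (by simp) p).hasFDerivAt
  have key : ∀ u z : ℝ × ℝ × ℝ, D u (D z f) p = fderiv ℝ (fderiv ℝ f) p u z := by
    intro u z
    have h1 : HasFDerivAt (fun q => fderiv ℝ f q z)
        ((ContinuousLinearMap.apply ℝ ℝ z).comp (fderiv ℝ (fderiv ℝ f) p)) p :=
      (ContinuousLinearMap.apply ℝ ℝ z).hasFDerivAt.comp p hx
    show fderiv ℝ (fun q => fderiv ℝ f q z) p u = _
    rw [h1.fderiv]; rfl
  rw [key, key, second_derivative_symmetric hdiff hx v w]

lemma D_add (v : ℝ × ℝ × ℝ) {f g : ℝ × ℝ × ℝ → ℝ} (hf : ContDiff ℝ (⊤ : ℕ∞) f) (hg : ContDiff ℝ (⊤ : ℕ∞) g) :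
    D v (fun r => f r + g r) = fun p => D v f p + D v g p := by
  funext p
  show fderiv ℝ (fun r => f r + g r) p v = _
  rw [fderiv_fun_add (hf.differentiable (by simp) p) (hg.differentiable (by simp) p)]
  rfl

lemma D_mul (v : ℝ × ℝ × ℝ) {f g : ℝ × ℝ × ℝ → ℝ} (hf : ContDiff ℝ (⊤ : ℕ∞) f) (hg : ContDiff ℝ (⊤ : ℕ∞) g) :
    D v (fun r => f r * g r) = fun p => f p * D v g p + g p * D v f p := by
  funext p
  show fderiv ℝ (fun r => f r * g r) p v = _
  rw [fderiv_fun_mul (hf.differentiable (by simp) p) (hg.differentiable (by simp) p)]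
  simp [D]

lemma D_two_mul (v : ℝ × ℝ × ℝ) {f : ℝ × ℝ × ℝ → ℝ} (hf : ContDiff ℝ (⊤ : ℕ∞) f) :
    D v (fun r => 2 * f r) = fun p => 2 * D v f p := by
  funext p
  show fderiv ℝ (fun r => 2 * f r) p v = _
  rw [fderiv_const_mul (hf.differentiable (by simp) p) 2]
  simp [D]

lemma pt_eq {f : ℝ × ℝ × ℝ → ℝ} (hf : ContDiff ℝ (⊤ : ℕ∞) f) : pt f = D (1,0,0) f := by
  funext p
  have hl : HasDerivAt (fun s : ℝ => (s, p.2.1, p.2.2)) ((1:ℝ),(0:ℝ),(0:ℝ)) p.1 :=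
    HasDerivAt.prodMk (hasDerivAt_id _) (HasDerivAt.prodMk (hasDerivAt_const _ _) (hasDerivAt_const _ _))
  have hc := (hf.differentiable (by simp) p).hasFDerivAt.comp_hasDerivAt p.1 hl
  exact hc.deriv

lemma px_eq {f : ℝ × ℝ × ℝ → ℝ} (hf : ContDiff ℝ (⊤ : ℕ∞) f) : px f = D (0,1,0) f := by
  funext p
  have hl : HasDerivAt (fun s : ℝ => (p.1, s, p.2.2)) ((0:ℝ),(1:ℝ),(0:ℝ)) p.2.1 :=
    HasDerivAt.prodMk (hasDerivAt_const _ _) (HasDerivAt.prodMk (hasDerivAt_id _) (hasDerivAt_const _ _))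
  have hc := (hf.differentiable (by simp) p).hasFDerivAt.comp_hasDerivAt p.2.1 hl
  exact hc.deriv

lemma py_eq {f : ℝ × ℝ × ℝ → ℝ} (hf : ContDiff ℝ (⊤ : ℕ∞) f) : py f = D (0,0,1) f := by
  funext p
  have hl : HasDerivAt (fun s : ℝ => (p.1, p.2.1, s)) ((0:ℝ),(0:ℝ),(1:ℝ)) p.2.2 :=
    HasDerivAt.prodMk (hasDerivAt_const _ _) (HasDerivAt.prodMk (hasDerivAt_const _ _) (hasDerivAt_id _))
  have hc := (hf.differentiable (by simp) p).hasFDerivAt.comp_hasDerivAt p.2.2 hl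
  exact hc.deriv

lemma lap_eq {f : ℝ × ℝ × ℝ → ℝ} (hf : ContDiff ℝ (⊤ : ℕ∞) f) :
    lap f = fun p => D (0,1,0) (D (0,1,0) f) p + D (0,0,1) (D (0,0,1) f) p := by
  funext p
  show px (px f) p + py (py f) p = _
  rw [px_eq hf, py_eq hf, px_eq (D_smooth _ hf), py_eq (D_smooth _ hf)]

lemma lap_smooth {f : ℝ × ℝ × ℝ → ℝ} (hf : ContDiff ℝ (⊤ : ℕ∞) f) : ContDiff ℝ (⊤ : ℕ∞) (lap f) := by
  rw [lap_eq hf]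
  exact (D_smooth _ (D_smooth _ hf)).add (D_smooth _ (D_smooth _ hf))

end VortAux

open VortAux in
/-- q = φ is an adjoint-symmetry of the 2D vorticity equation. -/
theorem vorticity_adjoint_symmetry_phi
    (φ : ℝ × ℝ × ℝ → ℝ) (hφ : ContDiff ℝ (⊤ : ℕ∞) φ) (hvort : VorticityEq φ) :
    AdjointSymmetryEq φ φ := by
  intro p
  have hL : ContDiff ℝ (⊤ : ℕ∞) (lap φ) := lap_smooth hφ
  have ex : px φ = D (0,1,0) φ := px_eq hφ
  have ey : py φ = D (0,0,1) φ := py_eq hφ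
  have exL : px (lap φ) = D (0,1,0) (lap φ) := px_eq hL
  have eyL : py (lap φ) = D (0,0,1) (lap φ) := py_eq hL
  have etL : pt (lap φ) = D (1,0,0) (lap φ) := pt_eq hL
  -- smoothness of the products
  have hA2 : ContDiff ℝ (⊤ : ℕ∞) (fun r => D (0,1,0) φ r * φ r) := (D_smooth _ hφ).mul hφ
  have hA4 : ContDiff ℝ (⊤ : ℕ∞) (fun r => D (0,0,1) φ r * φ r) := (D_smooth _ hφ).mul hφ
  have hF : ContDiff ℝ (⊤ : ℕ∞) (fun r => φ r * φ r) := hφ.mul hφ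
  show pt (lap φ) p
      + py (lap (fun r => px φ r * φ r)) p
      + px (fun r => py (lap φ) r * φ r) p
      - px (lap (fun r => py φ r * φ r)) p
      - py (fun r => px (lap φ) r * φ r) p = 0
  simp only [ex, ey, exL, eyL, etL]
  -- expand the second term
  have h2 : py (lap (fun r => D (0,1,0) φ r * φ r)) p
      = D (0,0,1) (D (0,1,0) (D (0,1,0) (fun r => D (0,1,0) φ r * φ r))) p
        + D (0,0,1) (D (0,0,1) (D (0,0,1) (fun r => D (0,1,0) φ r * φ r))) p := by
    rw [py_eq (lap_smooth hA2), lap_eq hA2,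
      D_add (0,0,1) (D_smooth _ (D_smooth _ hA2)) (D_smooth _ (D_smooth _ hA2))]
  -- expand the fourth term
  have h4 : px (lap (fun r => D (0,0,1) φ r * φ r)) p
      = D (0,1,0) (D (0,1,0) (D (0,1,0) (fun r => D (0,0,1) φ r * φ r))) p
        + D (0,1,0) (D (0,0,1) (D (0,0,1) (fun r => D (0,0,1) φ r * φ r))) p := by
    rw [px_eq (lap_smooth hA4), lap_eq hA4,
      D_add (0,1,0) (D_smooth _ (D_smooth _ hA4)) (D_smooth _ (D_smooth _ hA4))]
  -- expand the third term
  have h3 : px (fun r => D (0,0,1) (lap φ) r * φ r) p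
      = D (0,0,1) (lap φ) p * D (0,1,0) φ p + φ p * D (0,1,0) (D (0,0,1) (lap φ)) p := by
    rw [px_eq ((D_smooth _ hL).mul hφ), D_mul (0,1,0) (D_smooth _ hL) hφ]
  -- expand the fifth term
  have h5 : py (fun r => D (0,1,0) (lap φ) r * φ r) p
      = D (0,1,0) (lap φ) p * D (0,0,1) φ p + φ p * D (0,0,1) (D (0,1,0) (lap φ)) p := by
    rw [py_eq ((D_smooth _ hL).mul hφ), D_mul (0,0,1) (D_smooth _ hL) hφ]
  -- the factor-two identities: φ_x·φ = ½ ∂_x(φ²), φ_y·φ = ½ ∂_y(φ²)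
  have eFx : D (0,1,0) (fun r => φ r * φ r) = fun r => 2 * (D (0,1,0) φ r * φ r) := by
    rw [D_mul (0,1,0) hφ hφ]; funext r
    show φ r * D (0,1,0) φ r + φ r * D (0,1,0) φ r = 2 * (D (0,1,0) φ r * φ r)
    ring
  have eFy : D (0,0,1) (fun r => φ r * φ r) = fun r => 2 * (D (0,0,1) φ r * φ r) := by
    rw [D_mul (0,0,1) hφ hφ]; funext r
    show φ r * D (0,0,1) φ r + φ r * D (0,0,1) φ r = 2 * (D (0,0,1) φ r * φ r)
    ring
  have s1 : D (0,1,0) (D (0,1,0) (fun r => φ r * φ r))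
      = fun q => 2 * D (0,1,0) (fun r => D (0,1,0) φ r * φ r) q := by
    rw [eFx, D_two_mul _ hA2]
  have s2 : D (0,1,0) (D (0,1,0) (D (0,1,0) (fun r => φ r * φ r)))
      = fun q => 2 * D (0,1,0) (D (0,1,0) (fun r => D (0,1,0) φ r * φ r)) q := by
    rw [s1, D_two_mul _ (D_smooth _ hA2)]
  have s3 : D (0,0,1) (D (0,1,0) (D (0,1,0) (D (0,1,0) (fun r => φ r * φ r))))
      = fun q => 2 * D (0,0,1) (D (0,1,0) (D (0,1,0) (fun r => D (0,1,0) φ r * φ r))) q := by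
    rw [s2, D_two_mul _ (D_smooth _ (D_smooth _ hA2))]
  have u1 : D (0,0,1) (D (0,1,0) (fun r => φ r * φ r))
      = fun q => 2 * D (0,0,1) (fun r => D (0,1,0) φ r * φ r) q := by
    rw [eFx, D_two_mul _ hA2]
  have u2 : D (0,0,1) (D (0,0,1) (D (0,1,0) (fun r => φ r * φ r)))
      = fun q => 2 * D (0,0,1) (D (0,0,1) (fun r => D (0,1,0) φ r * φ r)) q := by
    rw [u1, D_two_mul _ (D_smooth _ hA2)]
  have u3 : D (0,0,1) (D (0,0,1) (D (0,0,1) (D (0,1,0) (fun r => φ r * φ r))))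
      = fun q => 2 * D (0,0,1) (D (0,0,1) (D (0,0,1) (fun r => D (0,1,0) φ r * φ r))) q := by
    rw [u2, D_two_mul _ (D_smooth _ (D_smooth _ hA2))]
  have w1 : D (0,1,0) (D (0,0,1) (fun r => φ r * φ r))
      = fun q => 2 * D (0,1,0) (fun r => D (0,0,1) φ r * φ r) q := by
    rw [eFy, D_two_mul _ hA4]
  have w2 : D (0,1,0) (D (0,1,0) (D (0,0,1) (fun r => φ r * φ r)))
      = fun q => 2 * D (0,1,0) (D (0,1,0) (fun r => D (0,0,1) φ r * φ r)) q := by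
    rw [w1, D_two_mul _ (D_smooth _ hA4)]
  have w3 : D (0,1,0) (D (0,1,0) (D (0,1,0) (D (0,0,1) (fun r => φ r * φ r))))
      = fun q => 2 * D (0,1,0) (D (0,1,0) (D (0,1,0) (fun r => D (0,0,1) φ r * φ r))) q := by
    rw [w2, D_two_mul _ (D_smooth _ (D_smooth _ hA4))]
  have z1 : D (0,0,1) (D (0,0,1) (fun r => φ r * φ r))
      = fun q => 2 * D (0,0,1) (fun r => D (0,0,1) φ r * φ r) q := by
    rw [eFy, D_two_mul _ hA4]
  have z2 : D (0,0,1) (D (0,0,1) (D (0,0,1) (fun r => φ r * φ r)))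
      = fun q => 2 * D (0,0,1) (D (0,0,1) (fun r => D (0,0,1) φ r * φ r)) q := by
    rw [z1, D_two_mul _ (D_smooth _ hA4)]
  have z3 : D (0,1,0) (D (0,0,1) (D (0,0,1) (D (0,0,1) (fun r => φ r * φ r))))
      = fun q => 2 * D (0,1,0) (D (0,0,1) (D (0,0,1) (fun r => D (0,0,1) φ r * φ r))) q := by
    rw [z2, D_two_mul _ (D_smooth _ (D_smooth _ hA4))]
  -- commutation of mixed derivatives of φ²
  have c1 : D (0,0,1) (D (0,1,0) (fun r => φ r * φ r))
      = D (0,1,0) (D (0,0,1) (fun r => φ r * φ r)) := D_comm _ _ hF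
  have c2 : D (0,0,1) (D (0,1,0) (D (0,1,0) (fun r => φ r * φ r)))
      = D (0,1,0) (D (0,1,0) (D (0,0,1) (fun r => φ r * φ r))) := by
    rw [D_comm (0,0,1) (0,1,0) (D_smooth _ hF), c1]
  have c3 : D (0,0,1) (D (0,1,0) (D (0,1,0) (D (0,1,0) (fun r => φ r * φ r))))
      = D (0,1,0) (D (0,1,0) (D (0,1,0) (D (0,0,1) (fun r => φ r * φ r)))) := by
    rw [D_comm (0,0,1) (0,1,0) (D_smooth _ (D_smooth _ hF)), c2]
  have d3 : D (0,0,1) (D (0,0,1) (D (0,0,1) (D (0,1,0) (fun r => φ r * φ r))))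
      = D (0,1,0) (D (0,0,1) (D (0,0,1) (D (0,0,1) (fun r => φ r * φ r)))) := by
    rw [c1, D_comm (0,0,1) (0,1,0) (D_smooth _ hF),
      D_comm (0,0,1) (0,1,0) (D_smooth _ (D_smooth _ hF))]
  -- the two key cancellations
  have key1 : D (0,0,1) (D (0,1,0) (D (0,1,0) (fun r => D (0,1,0) φ r * φ r))) p
      = D (0,1,0) (D (0,1,0) (D (0,1,0) (fun r => D (0,0,1) φ r * φ r))) p := by
    have hs := congrFun s3 p
    have hw := congrFun w3 p
    rw [c3] at hs
    have := hs.symm.trans hw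
    linarith
  have key2 : D (0,0,1) (D (0,0,1) (D (0,0,1) (fun r => D (0,1,0) φ r * φ r))) p
      = D (0,1,0) (D (0,0,1) (D (0,0,1) (fun r => D (0,0,1) φ r * φ r))) p := by
    have hu := congrFun u3 p
    have hz := congrFun z3 p
    rw [d3] at hu
    have := hu.symm.trans hz
    linarith
  -- commutation on the Laplacian
  have ccL : D (0,1,0) (D (0,0,1) (lap φ)) p = D (0,0,1) (D (0,1,0) (lap φ)) p :=
    congrFun (D_comm (0,1,0) (0,0,1) hL) p
  -- the vorticity equation in D-form
  have hv := hvort p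
  rw [ex, ey, exL, eyL, etL] at hv
  rw [h2, h3, h4, h5, key1, key2, ccL]
  linarith
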